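/- Let 0 < p < 1. Then there exists a sequence μ : ℕ → [0,∞) with ∑_{j≥0} μ_j^{p/(1−p)} < ∞ such that sup_{n≥0} ‖M_n‖_{ℓ∞⊗_pℓ∞} = ∞, where M_n is the (n+1)×(n+1) diagonal matrix with diagonal entries μ_0, …, μ_n. (Hence the space ℓ∞⊗_p^c ℓ∞ does not contain all diagonal matrices whose diagonal lies in ℓ^{p♯}, and consequently ℓ∞⊗_p^c ℓ∞ ≠ 𝔐_p.) -/

import Mathlib

open scoped BigOperators

/-- The sup norm of a vector/sequence of complex numbers. -/
noncomputable def supNorm {ι : Type*} (x : ι → ℂ) : ℝ := ⨆ i, ‖x i‖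

/-- The set of values `(∑ₙ ‖xₙ‖_∞^p ‖yₙ‖_∞^p)^(1/p)` over all representations
`M j k = ∑ₙ xₙ(j) yₙ(k)` of the matrix `M` as a sum of rank-one matrices with
bounded rows/columns.  `M` lies in `ℓ∞ ⊗_p ℓ∞` iff this set is nonempty, and
`‖M‖_{ℓ∞⊗_pℓ∞}` is its infimum. -/
noncomputable def tensorReprVals {ι : Type*} (p : ℝ) (M : ι → ι → ℂ) : Set ℝ :=
  {c | ∃ x y : ℕ → ι → ℂ,
    (∀ n, BddAbove (Set.range fun i => ‖x n i‖)) ∧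
    (∀ n, BddAbove (Set.range fun i => ‖y n i‖)) ∧
    Summable (fun n => supNorm (x n) ^ p * supNorm (y n) ^ p) ∧
    (∀ i j, HasSum (fun n => x n i * y n j) (M i j)) ∧
    c = (∑' n, supNorm (x n) ^ p * supNorm (y n) ^ p) ^ (1 / p)}

/-!
Let `μ` (`diagSeq`) be constant, equal to `t_k`, on consecutive blocks of sizes `s_k`, where
`s_k ^ (1 - p) * t_k ^ p = γ_k = (k + 1) ^ (p / 2 - 1)`. Then
`∑ μ_j ^ (p / (1 - p)) = ∑ γ_k ^ (1 / (1 - p)) < ∞`, whereas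
`Λ_K = (∑_{√K < k ≤ K} γ_k) / 8` (`lowerBound`) grows like `K ^ (p / 2)`.

Let `∑ₙ xₙ ⊗ yₙ` represent a truncation of `diag μ` containing the first `K + 1` blocks, put
`aₙ = ‖xₙ‖_∞ ‖yₙ‖_∞` (`termNorm`) and `A = ∑ aₙ ^ p`, and suppose `A < Λ_K`. Fix a block `k`
of size `s` and height `t`, and let `F = {n | aₙ > t / s}`. The vectors supported in the block
and annihilated by the `yₙ`, `n ∈ F`, form a space of dimension `d ≥ s - #F`; the trace of the
block against an orthonormal basis of it is `d t`, and Bessel's inequality bounds it by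
`s ∑_{n ∉ F} aₙ`. As fewer than `s / 2` of the `aₙ` exceed `τ_k`, either the `aₙ` in the band
`(β_k, τ_k] ∋ t / s` carry `∑ aₙ ^ p ≥ γ_k / 8`, or those below `β_k` carry `∑ aₙ ≥ t / 8`; the
latter contradicts `A < Λ_K` since `aₙ ≤ β_k ^ (1 - p) aₙ ^ p` there. The blocks grow so fast
that the bands of the blocks `√K < k ≤ K` are disjoint, whence `A ≥ ∑_{√K < k ≤ K} γ_k / 8 = Λ_K`.
-/

open Filter Finset

namespace DiagonalTensorNorm

lemma supNorm_nonneg {ι : Type*} (x : ι → ℂ) : 0 ≤ supNorm x :=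
  Real.iSup_nonneg fun _ => norm_nonneg _

noncomputable def termNorm {ι : Type*} (x y : ℕ → ι → ℂ) (n : ℕ) : ℝ :=
  supNorm (x n) * supNorm (y n)

lemma termNorm_nonneg {ι : Type*} (x y : ℕ → ι → ℂ) (n : ℕ) : 0 ≤ termNorm x y n :=
  mul_nonneg (supNorm_nonneg _) (supNorm_nonneg _)

section RealSequences

variable {α : Type*} {p : ℝ} {a : α → ℝ}

lemma summable_of_summable_rpow (hp0 : 0 < p) (hp1 : p ≤ 1) (ha0 : ∀ n, 0 ≤ a n)
    (ha : Summable fun n => a n ^ p) : Summable a := by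
  refine Summable.of_norm_bounded_eventually ha ?_
  filter_upwards [ha.tendsto_cofinite_zero.eventually_lt_const one_pos] with n hn
  have han : a n ≤ 1 := not_lt.mp fun h => (Real.one_lt_rpow h hp0).not_gt hn
  rw [Real.norm_of_nonneg (ha0 n)]
  exact Real.self_le_rpow_of_le_one (ha0 n) han hp1

lemma le_rpow_one_sub_mul_rpow {x c : ℝ} (hx : 0 ≤ x) (hxc : x ≤ c) (hp : p ≤ 1) :
    x ≤ c ^ (1 - p) * x ^ p := by
  rcases hx.eq_or_lt with rfl | hx
  · exact mul_nonneg (Real.rpow_nonneg hxc _) (Real.rpow_nonneg le_rfl _)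
  calc x = x ^ (1 - p) * x ^ p := by rw [← Real.rpow_add hx]; norm_num
    _ ≤ c ^ (1 - p) * x ^ p := by gcongr

lemma tsum_indicator_Iic_le (hp1 : p ≤ 1) (ha0 : ∀ n, 0 ≤ a n)
    (ha : Summable fun n => a n ^ p) {β : ℝ} (hβ : 0 ≤ β) :
    ∑' n, (a ⁻¹' Set.Iic β).indicator a n ≤ β ^ (1 - p) * ∑' n, a n ^ p := by
  have hle : ∀ n, (a ⁻¹' Set.Iic β).indicator a n ≤ β ^ (1 - p) * a n ^ p := fun n => by
    by_cases hn : a n ≤ β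
    · simpa [Set.indicator_of_mem (show n ∈ a ⁻¹' Set.Iic β from hn)] using
        le_rpow_one_sub_mul_rpow (ha0 n) hn hp1
    · rw [Set.indicator_of_notMem (show n ∉ a ⁻¹' Set.Iic β from hn)]
      exact mul_nonneg (Real.rpow_nonneg hβ _) (Real.rpow_nonneg (ha0 n) _)
  rw [← tsum_mul_left]
  refine Summable.tsum_le_tsum hle (Summable.of_nonneg_of_le (fun n => ?_) hle ?_) (ha.mul_left _)
  · exact Set.indicator_nonneg (fun n _ => ha0 n) n
  · exact ha.mul_left _

lemma tsum_indicator_Iic_le_add (hp0 : 0 < p) (hp1 : p ≤ 1) (ha0 : ∀ n, 0 ≤ a n)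
    (ha : Summable fun n => a n ^ p) {β q τ : ℝ} (hq : 0 ≤ q) (hqτ : q ≤ τ) :
    ∑' n, (a ⁻¹' Set.Iic q).indicator a n ≤
      q ^ (1 - p) * ∑' n, (a ⁻¹' Set.Ioc β τ).indicator (fun n => a n ^ p) n +
        ∑' n, (a ⁻¹' Set.Iic β).indicator a n := by
  have haS := summable_of_summable_rpow hp0 hp1 ha0 ha
  have hW0 : ∀ n, 0 ≤ (a ⁻¹' Set.Ioc β τ).indicator (fun n => a n ^ p) n :=
    fun n => Set.indicator_nonneg (fun n _ => Real.rpow_nonneg (ha0 n) p) n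
  rw [← tsum_mul_left, ← ((ha.indicator _).mul_left _).tsum_add (haS.indicator _)]
  refine Summable.tsum_le_tsum (fun n => ?_) (haS.indicator _)
    (((ha.indicator _).mul_left _).add (haS.indicator _))
  by_cases hnq : a n ≤ q
  swap
  · rw [Set.indicator_of_notMem (show n ∉ a ⁻¹' Set.Iic q from hnq)]
    exact add_nonneg (mul_nonneg (Real.rpow_nonneg hq _) (hW0 n))
      (Set.indicator_nonneg (fun n _ => ha0 n) n)
  rw [Set.indicator_of_mem (show n ∈ a ⁻¹' Set.Iic q from hnq)]
  by_cases hnβ : a n ≤ β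
  · rw [Set.indicator_of_mem (show n ∈ a ⁻¹' Set.Iic β from hnβ)]
    linarith [mul_nonneg (Real.rpow_nonneg hq (1 - p)) (hW0 n)]
  · rw [Set.indicator_of_mem (show n ∈ a ⁻¹' Set.Ioc β τ from ⟨not_le.mp hnβ, hnq.trans hqτ⟩),
      Set.indicator_of_notMem (show n ∉ a ⁻¹' Set.Iic β from hnβ), add_zero]
    exact le_rpow_one_sub_mul_rpow (ha0 n) hnq hp1

lemma card_mul_le_tsum {f : α → ℝ} (hf0 : ∀ n, 0 ≤ f n) (hf : Summable f) (S : Finset α)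
    {c : ℝ} (hc : ∀ n ∈ S, c ≤ f n) : #S * c ≤ ∑' n, f n := by
  calc #S * c = #S • c := (nsmul_eq_mul _ _).symm
    _ ≤ ∑ n ∈ S, f n := S.card_nsmul_le_sum f c hc
    _ ≤ ∑' n, f n := hf.sum_le_tsum S fun n _ => hf0 n

lemma sum_tsum_indicator_le_tsum {ι : Type*} {f : α → ℝ} (hf0 : ∀ n, 0 ≤ f n) (hf : Summable f)
    (G : Finset ι) (S : ι → Set α) (hS : (G : Set ι).PairwiseDisjoint S) :
    ∑ k ∈ G, ∑' n, (S k).indicator f n ≤ ∑' n, f n := by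
  rw [← Summable.tsum_finsetSum fun k _ => hf.indicator _]
  refine Summable.tsum_le_tsum (fun n => ?_) (summable_sum fun k _ => hf.indicator _) hf
  rw [← Finset.indicator_biUnion_apply G S hS]
  exact Set.indicator_le_self' (fun n _ => hf0 n) n

lemma pairwiseDisjoint_Ioc {β τ : ℕ → ℝ} (G : Set ℕ)
    (h : ∀ k ∈ G, ∀ k', k < k' → τ k' ≤ β k) : G.PairwiseDisjoint fun k => Set.Ioc (β k) (τ k) := by
  intro k hk k' hk' hne
  rcases lt_or_gt_of_ne hne with hlt | hlt
  · exact (Set.Ioc_disjoint_Ioc_of_le (h k hk k' hlt)).symm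
  · exact Set.Ioc_disjoint_Ioc_of_le (h k' hk' k hlt)

end RealSequences

section LinearAlgebra

variable {ι : Type*} [Fintype ι]

lemma hasSum_sum_mul_sum {x y : ℕ → ι → ℂ} {M : ι → ι → ℂ}
    (h : ∀ i j, HasSum (fun n => x n i * y n j) (M i j)) (u w : ι → ℂ) :
    HasSum (fun n => (∑ i, u i * x n i) * (∑ j, w j * y n j)) (∑ i, ∑ j, u i * w j * M i j) := by
  simp only [Finset.sum_mul_sum]
  refine hasSum_sum fun i _ => hasSum_sum fun j _ => ?_
  have e : (fun n => u i * x n i * (w j * y n j)) = fun n => u i * w j * (x n i * y n j) :=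
    funext fun n => by ring
  exact e ▸ (h i j).mul_left (u i * w j)

variable [DecidableEq ι]

lemma exists_orthonormal_supported_orthogonal {α : Type*} (B : Finset ι) (F : Finset α)
    (y : α → ι → ℂ) :
    ∃ (d : ℕ) (v : Fin d → EuclideanSpace ℂ ι), Orthonormal ℂ v ∧
      (∀ r, ∀ i ∉ B, v r i = 0) ∧ (∀ r, ∀ n ∈ F, ∑ j, v r j * y n j = 0) ∧ #B ≤ #F + d := by
  let toFun : EuclideanSpace ℂ ι →ₗ[ℂ] (ι → ℂ) := (WithLp.linearEquiv 2 ℂ (ι → ℂ)).toLinearMap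
  let L₁ : EuclideanSpace ℂ ι →ₗ[ℂ] ({i // i ∉ B} → ℂ) :=
    LinearMap.pi fun i => (LinearMap.proj i.1).comp toFun
  let L₂ : EuclideanSpace ℂ ι →ₗ[ℂ] (F → ℂ) :=
    LinearMap.pi fun n => (∑ j, y n.1 j • LinearMap.proj j).comp toFun
  let L := L₁.prod L₂
  let onb := stdOrthonormalBasis ℂ (LinearMap.ker L)
  have hker : ∀ r, L₁ (onb r) = 0 ∧ L₂ (onb r) = 0 := fun r => Prod.mk_eq_zero.mp (onb r).2
  refine ⟨_, fun r => onb r, ?_, fun r i hi => ?_, fun r n hn => ?_, ?_⟩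
  · exact onb.orthonormal.comp_linearIsometry (LinearMap.ker L).subtypeₗᵢ
  · exact congrFun (hker r).1 ⟨i, hi⟩
  · have h := congrFun (hker r).2 ⟨n, hn⟩
    simp only [L₂, LinearMap.pi_apply, LinearMap.comp_apply, LinearMap.sum_apply,
      LinearMap.smul_apply, LinearMap.proj_apply, smul_eq_mul, Pi.zero_apply] at h
    rw [← h]
    exact Finset.sum_congr rfl fun j _ => mul_comm _ _
  · have hrank := LinearMap.finrank_range_add_finrank_ker L
    have hrange : Module.finrank ℂ (LinearMap.range L) ≤ (Fintype.card ι - #B) + #F := by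
      refine (Submodule.finrank_le _).trans ?_
      rw [Module.finrank_prod, Module.finrank_pi, Module.finrank_pi, Fintype.card_coe,
        Fintype.card_subtype_compl, Fintype.card_coe]
    have hB : #B ≤ Fintype.card ι := B.card_le_univ
    rw [finrank_euclideanSpace] at hrank
    omega

open ComplexConjugate in
lemma sum_norm_sum_conj_mul_sq_le {d : ℕ} {v : Fin d → EuclideanSpace ℂ ι} (hv : Orthonormal ℂ v)
    {B : Finset ι} (hvB : ∀ r, ∀ i ∉ B, v r i = 0) (z : ι → ℂ) {c : ℝ} (hz : ∀ i, ‖z i‖ ≤ c) :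
    ∑ r, ‖∑ i, conj (v r i) * z i‖ ^ 2 ≤ #B * c ^ 2 := by
  let zB : EuclideanSpace ℂ ι := WithLp.toLp 2 fun i => if i ∈ B then z i else 0
  have hinner : ∀ r, ∑ i, conj (v r i) * z i = inner ℂ (v r) zB := fun r => by
    rw [PiLp.inner_apply]
    refine Finset.sum_congr rfl fun i _ => ?_
    by_cases hi : i ∈ B
    · simp [zB, hi, mul_comm]
    · simp [zB, hi, hvB r i hi]
  calc ∑ r, ‖∑ i, conj (v r i) * z i‖ ^ 2 = ∑ r, ‖inner ℂ (v r) zB‖ ^ 2 := by simp only [hinner]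
    _ ≤ ‖zB‖ ^ 2 := hv.sum_inner_products_le zB
    _ = ∑ i ∈ B, ‖z i‖ ^ 2 := by
      rw [EuclideanSpace.norm_sq_eq,
        ← Finset.sum_subset B.subset_univ fun i _ hi => by simp [zB, hi]]
      exact Finset.sum_congr rfl fun i hi => by simp [zB, hi]
    _ ≤ ∑ i ∈ B, c ^ 2 := Finset.sum_le_sum fun i _ => pow_le_pow_left₀ (norm_nonneg _) (hz i) 2
    _ = #B * c ^ 2 := by rw [Finset.sum_const, nsmul_eq_mul]

open ComplexConjugate in
lemma norm_sum_mul_le_card_mul {d : ℕ} {v : Fin d → EuclideanSpace ℂ ι} (hv : Orthonormal ℂ v)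
    {B : Finset ι} (hvB : ∀ r, ∀ i ∉ B, v r i = 0) (x y : ι → ℂ) {X Y : ℝ} (hX : 0 ≤ X)
    (hY : 0 ≤ Y) (hx : ∀ i, ‖x i‖ ≤ X) (hy : ∀ j, ‖y j‖ ≤ Y) :
    ‖∑ r, (∑ i, conj (v r i) * x i) * (∑ j, v r j * y j)‖ ≤ #B * (X * Y) := by
  have hy' : ∀ r, ‖∑ j, v r j * y j‖ = ‖∑ j, conj (v r j) * conj (y j)‖ := fun r => by
    simp only [← map_mul, ← map_sum, RCLike.norm_conj]
  have hαβ : (∑ r, ‖∑ i, conj (v r i) * x i‖ ^ 2) * ∑ r, ‖∑ j, v r j * y j‖ ^ 2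
      ≤ (#B * (X * Y)) ^ 2 := by
    have hα := sum_norm_sum_conj_mul_sq_le hv hvB x hx
    have hβ := sum_norm_sum_conj_mul_sq_le hv hvB (fun j => conj (y j)) (c := Y)
      fun j => (RCLike.norm_conj _).trans_le (hy j)
    simp only [← hy'] at hβ
    calc _ ≤ (#B * X ^ 2) * (#B * Y ^ 2) :=
          mul_le_mul hα hβ (Finset.sum_nonneg fun _ _ => by positivity) (by positivity)
      _ = (#B * (X * Y)) ^ 2 := by ring
  calc _ ≤ ∑ r, ‖∑ i, conj (v r i) * x i‖ * ‖∑ j, v r j * y j‖ :=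
        (norm_sum_le _ _).trans_eq (by simp only [norm_mul])
    _ ≤ √(∑ r, ‖∑ i, conj (v r i) * x i‖ ^ 2) * √(∑ r, ‖∑ j, v r j * y j‖ ^ 2) :=
        Real.sum_mul_le_sqrt_mul_sqrt _ _ _
    _ ≤ #B * (X * Y) := by
        rw [← Real.sqrt_mul (Finset.sum_nonneg fun _ _ => by positivity)]
        exact Real.sqrt_le_iff.mpr ⟨by positivity, hαβ⟩

open ComplexConjugate in
lemma sub_card_mul_le_tsum_indicator {μ : ι → ℝ} {x y : ℕ → ι → ℂ}
    (hbx : ∀ n, BddAbove (Set.range fun i => ‖x n i‖))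
    (hby : ∀ n, BddAbove (Set.range fun i => ‖y n i‖))
    (hsum : ∀ i j, HasSum (fun n => x n i * y n j) (if i = j then (μ i : ℂ) else 0))
    (ha : Summable (termNorm x y))
    {B : Finset ι} {t : ℝ} (ht : 0 ≤ t) (hμB : ∀ i ∈ B, μ i = t) (F : Finset ℕ) :
    ((#B : ℝ) - #F) * t ≤ #B * ∑' n, (↑F : Set ℕ)ᶜ.indicator (termNorm x y) n := by
  obtain ⟨d, v, hv, hvB, hvF, hcard⟩ := exists_orthonormal_supported_orthogonal B F y
  set g : ℕ → ℂ := fun n => ∑ r, (∑ i, conj (v r i) * x n i) * (∑ j, v r j * y n j)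
  have hunit : ∀ r, ∑ i, ∑ j, conj (v r i) * v r j * (if i = j then (μ i : ℂ) else 0) = t := by
    intro r
    have hnorm : ∑ i, conj (v r i) * v r i = 1 := by
      have h := orthonormal_iff_ite.mp hv r r
      rw [if_pos rfl, PiLp.inner_apply] at h
      rw [← h]
      exact Finset.sum_congr rfl fun i _ => (RCLike.inner_apply' _ _).symm
    calc _ = ∑ i, (t : ℂ) * (conj (v r i) * v r i) := by
          refine Finset.sum_congr rfl fun i _ => ?_
          simp only [mul_ite, mul_zero, Finset.sum_ite_eq, Finset.mem_univ, if_true]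
          by_cases hi : i ∈ B
          · rw [hμB i hi]; ring
          · simp [hvB r i hi]
      _ = t := by rw [← Finset.mul_sum, hnorm, mul_one]
  have hg : HasSum g (d * t) := by
    have := hasSum_sum fun r (_ : r ∈ Finset.univ) =>
      hasSum_sum_mul_sum hsum (fun i => conj (v r i)) (fun j => v r j)
    rwa [Finset.sum_congr rfl fun r _ => hunit r, Finset.sum_const, Finset.card_univ,
      Fintype.card_fin, nsmul_eq_mul] at this
  have hgle : ∀ n, ‖g n‖ ≤ #B * (↑F : Set ℕ)ᶜ.indicator (termNorm x y) n := by
    intro n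
    by_cases hn : n ∈ F
    · simp [g, hvF _ n hn, hn]
    · rw [Set.indicator_of_mem (by simpa using hn)]
      exact norm_sum_mul_le_card_mul hv hvB _ _ (supNorm_nonneg _) (supNorm_nonneg _)
        (fun i => le_ciSup (hbx n) i) (fun j => le_ciSup (hby n) j)
  have hind : Summable ((↑F : Set ℕ)ᶜ.indicator (termNorm x y)) := ha.indicator _
  have hgs : Summable fun n => ‖g n‖ :=
    (hind.mul_left _).of_nonneg_of_le (fun _ => norm_nonneg _) hgle
  calc ((#B : ℝ) - #F) * t ≤ d * t := by
        gcongr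
        rw [sub_le_iff_le_add']
        exact_mod_cast hcard
    _ = ‖∑' n, g n‖ := by
        rw [hg.tsum_eq, norm_mul, Complex.norm_natCast, Complex.norm_of_nonneg ht]
    _ ≤ ∑' n, ‖g n‖ := norm_tsum_le_tsum_norm hgs
    _ ≤ _ := by
        rw [← tsum_mul_left]
        exact Summable.tsum_le_tsum hgle hgs (hind.mul_left _)

end LinearAlgebra

section Dichotomy

variable {p : ℝ} {a : ℕ → ℝ}

lemma block_dichotomy (hp0 : 0 < p) (hp1 : p ≤ 1) (ha0 : ∀ n, 0 ≤ a n)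
    (ha : Summable fun n => a n ^ p) {s t β τ : ℝ} (hs : 0 < s) (ht : 0 < t) (hβ : β < t / s)
    (hτ : t / s < τ) (hA : ∑' n, a n ^ p < s * τ ^ p / 2)
    (htrace : ∀ F : Finset ℕ, (s - #F) * t ≤ s * ∑' n, (↑F : Set ℕ)ᶜ.indicator a n) :
    s * (t / s) ^ p / 8 ≤ ∑' n, (a ⁻¹' Set.Ioc β τ).indicator (fun n => a n ^ p) n ∨
      t / 8 ≤ ∑' n, (a ⁻¹' Set.Iic β).indicator a n := by
  set q := t / s
  set W := ∑' n, (a ⁻¹' Set.Ioc β τ).indicator (fun n => a n ^ p) n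
  set S := ∑' n, (a ⁻¹' Set.Iic β).indicator a n
  have hq : 0 < q := div_pos ht hs
  have hsq : s * q = t := mul_div_cancel₀ t hs.ne'
  have haS : Summable a := summable_of_summable_rpow hp0 hp1 ha0 ha
  have hWs : Summable ((a ⁻¹' Set.Ioc β τ).indicator fun n => a n ^ p) := ha.indicator _
  have hW0 : ∀ n, 0 ≤ (a ⁻¹' Set.Ioc β τ).indicator (fun n => a n ^ p) n :=
    fun n => Set.indicator_nonneg (fun n _ => Real.rpow_nonneg (ha0 n) p) n
  have hfin : {n | q < a n}.Finite := by
    simpa using Filter.eventually_cofinite.mp (haS.tendsto_cofinite_zero.eventually_le_const hq)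
  set F := hfin.toFinset
  set U := F.filter fun n => a n ≤ τ
  set H := F.filter fun n => ¬a n ≤ τ
  have hUH : #U + #H = #F := Finset.card_filter_add_card_filter_not _
  have hU : #U * q ^ p ≤ W := card_mul_le_tsum hW0 hWs U fun n hn => by
    obtain ⟨hnF, hnτ⟩ := Finset.mem_filter.mp hn
    have hqn : q < a n := by simpa [F] using hnF
    rw [Set.indicator_of_mem (show n ∈ a ⁻¹' Set.Ioc β τ from ⟨hβ.trans hqn, hnτ⟩)]
    exact Real.rpow_le_rpow hq.le hqn.le hp0.le
  have hH : #H * τ ^ p ≤ ∑' n, a n ^ p :=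
    card_mul_le_tsum (fun n => Real.rpow_nonneg (ha0 n) p) ha H fun n hn =>
      Real.rpow_le_rpow (hq.trans hτ).le (not_le.mp (Finset.mem_filter.mp hn).2).le hp0.le
  have hlow : ∑' n, (↑F : Set ℕ)ᶜ.indicator a n ≤ q ^ (1 - p) * W + S := by
    have hFc : (↑F : Set ℕ)ᶜ = a ⁻¹' Set.Iic q := by ext n; simp [F]
    rw [hFc]
    exact tsum_indicator_Iic_le_add hp0 hp1 ha0 ha hq.le hτ.le
  by_contra! h
  obtain ⟨hW, hS⟩ := h
  have hU' : (#U : ℝ) < s / 8 :=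
    lt_of_mul_lt_mul_right (by linarith) (Real.rpow_nonneg hq.le p)
  have hH' : (#H : ℝ) < s / 2 :=
    lt_of_mul_lt_mul_right (by linarith) (Real.rpow_nonneg (hq.trans hτ).le p)
  have hWq : q ^ (1 - p) * W < t / 8 := by
    have hqq : q ^ (1 - p) * q ^ p = q := by rw [← Real.rpow_add hq]; norm_num
    calc q ^ (1 - p) * W < q ^ (1 - p) * (s * q ^ p / 8) :=
          mul_lt_mul_of_pos_left hW (Real.rpow_pos_of_pos hq _)
      _ = s * (q ^ (1 - p) * q ^ p) / 8 := by ring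
      _ = t / 8 := by rw [hqq, hsq]
  have hF : (#F : ℝ) = #U + #H := by exact_mod_cast hUH.symm
  have hupper : (s - #F) * t < s * (t / 4) := by
    refine (htrace F).trans_lt ((mul_le_mul_of_nonneg_left hlow hs.le).trans_lt ?_)
    exact mul_lt_mul_of_pos_left (by linarith) hs
  have hlower : 3 * s / 8 * t < (s - #F) * t := mul_lt_mul_of_pos_right (by linarith) ht
  nlinarith [mul_pos hs ht]

end Dichotomy

section Construction

variable (p : ℝ)

noncomputable def blockWeight (k : ℕ) : ℝ := ((k : ℝ) + 1) ^ (p / 2 - 1)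

noncomputable def heightFor (k s : ℕ) : ℝ := (blockWeight p k * (s : ℝ) ^ (p - 1)) ^ p⁻¹

/-- The size of block `k + 1` is taken so large that the bands `(lowerCut, upperCut]` of
consecutive blocks are disjoint as soon as `Λ ≤ (k + 2) ^ 2` (see
`upperCut_succ_le_lowerCut`). -/
noncomputable def blockSize : ℕ → ℕ
  | 0 => 1
  | k + 1 => blockSize k +
      ⌈2 * ((k : ℝ) + 2) ^ 2 *
        (8 * ((k : ℝ) + 2) ^ 2 / heightFor p k (blockSize k)) ^ (p / (1 - p))⌉₊

noncomputable def blockHeight (k : ℕ) : ℝ := heightFor p k (blockSize p k)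

noncomputable def blockStart : ℕ → ℕ
  | 0 => 0
  | k + 1 => blockStart k + blockSize p k

noncomputable def blockIndex (j : ℕ) : ℕ := Nat.findGreatest (fun k => blockStart p k ≤ j) j

noncomputable def diagSeq (j : ℕ) : ℝ := blockHeight p (blockIndex p j)

variable {p}

lemma blockWeight_pos (k : ℕ) : 0 < blockWeight p k := by unfold blockWeight; positivity

lemma blockWeight_le_one (hp : p ≤ 2) (k : ℕ) : blockWeight p k ≤ 1 :=
  Real.rpow_le_one_of_one_le_of_nonpos (by linarith [k.cast_nonneg (α := ℝ)]) (by linarith)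

lemma blockWeight_antitone (hp : p ≤ 2) : Antitone (blockWeight p) := fun k k' h =>
  Real.rpow_le_rpow_of_nonpos (by positivity) (by gcongr) (by linarith)

lemma blockSize_pos (k : ℕ) : 0 < blockSize p k := by
  cases k with
  | zero => simp [blockSize]
  | succ k => have := blockSize_pos k; simp only [blockSize]; omega

lemma blockSize_mono : Monotone (blockSize p) :=
  monotone_nat_of_le_succ fun k => by simp only [blockSize]; omega

lemma le_blockSize_succ (k : ℕ) :
    2 * ((k : ℝ) + 2) ^ 2 * (8 * ((k : ℝ) + 2) ^ 2 / blockHeight p k) ^ (p / (1 - p)) ≤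
      blockSize p (k + 1) := by
  simp only [blockSize, Nat.cast_add]
  exact (Nat.le_ceil _).trans (le_add_of_nonneg_left (Nat.cast_nonneg _))

lemma blockHeight_pos (k : ℕ) : 0 < blockHeight p k := by
  have := blockSize_pos (p := p) k
  have := blockWeight_pos (p := p) k
  unfold blockHeight heightFor
  positivity

lemma blockSize_mul_div_rpow (hp : p ≠ 0) (k : ℕ) :
    blockSize p k * (blockHeight p k / blockSize p k) ^ p = blockWeight p k := by
  have hs : (0 : ℝ) < blockSize p k := by exact_mod_cast blockSize_pos k
  have hγ := blockWeight_pos (p := p) k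
  rw [Real.div_rpow (blockHeight_pos k).le hs.le, blockHeight, heightFor,
    Real.rpow_inv_rpow (by positivity) hp, Real.rpow_sub_one hs.ne']
  field_simp

lemma blockStart_mono : Monotone (blockStart p) :=
  monotone_nat_of_le_succ fun _ => Nat.le_add_right _ _

lemma le_blockStart (k : ℕ) : k ≤ blockStart p k := by
  induction k with
  | zero => exact le_rfl
  | succ k ih => have := blockSize_pos (p := p) k; simp only [blockStart]; omega

lemma blockIndex_eq {k j : ℕ} (h₁ : blockStart p k ≤ j) (h₂ : j < blockStart p (k + 1)) :
    blockIndex p j = k := by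
  refine Nat.findGreatest_eq_iff.mpr ⟨(le_blockStart k).trans h₁, fun _ => h₁, fun n hkn _ hn => ?_⟩
  exact (h₂.trans_le (blockStart_mono hkn)).not_ge hn

lemma diagSeq_eq {k j : ℕ} (h₁ : blockStart p k ≤ j) (h₂ : j < blockStart p (k + 1)) :
    diagSeq p j = blockHeight p k := by
  rw [diagSeq, blockIndex_eq h₁ h₂]

lemma diagSeq_nonneg (j : ℕ) : 0 ≤ diagSeq p j := (blockHeight_pos _).le

lemma sum_range_blockStart (q : ℝ) (K : ℕ) :
    ∑ j ∈ range (blockStart p K), diagSeq p j ^ q =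
      ∑ k ∈ range K, blockSize p k * blockHeight p k ^ q := by
  induction K with
  | zero => simp [blockStart]
  | succ K ih =>
    have hblock : ∀ j ∈ Finset.Ico (blockStart p K) (blockStart p (K + 1)),
        diagSeq p j ^ q = blockHeight p K ^ q := fun j hj => by
      rw [diagSeq_eq (Finset.mem_Ico.mp hj).1 (Finset.mem_Ico.mp hj).2]
    rw [← Finset.sum_range_add_sum_Ico _ (blockStart_mono K.le_succ), ih, Finset.sum_range_succ,
      Finset.sum_congr rfl hblock, Finset.sum_const, Nat.card_Ico, nsmul_eq_mul]
    simp [blockStart]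

lemma blockSize_mul_blockHeight_rpow (hp0 : 0 < p) (hp1 : p < 1) (k : ℕ) :
    blockSize p k * blockHeight p k ^ (p / (1 - p)) = blockWeight p k ^ (1 - p)⁻¹ := by
  have hs : (0 : ℝ) < blockSize p k := by exact_mod_cast blockSize_pos k
  have ht := blockHeight_pos (p := p) k
  have h1p : 1 - p ≠ 0 := by linarith
  rw [← blockSize_mul_div_rpow hp0.ne', Real.div_rpow ht.le hs.le, ← mul_div_assoc,
    mul_div_right_comm, ← Real.rpow_one_sub' hs.le h1p,
    Real.mul_rpow (by positivity) (by positivity),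
    Real.rpow_rpow_inv hs.le h1p, ← Real.rpow_mul ht.le, div_eq_mul_inv]

lemma summable_blockWeight_rpow (hp0 : 0 < p) (hp1 : p < 1) :
    Summable fun k => blockWeight p k ^ (1 - p)⁻¹ := by
  have hr : (p / 2 - 1) * (1 - p)⁻¹ < -1 := by
    rw [← div_eq_mul_inv, div_lt_iff₀ (by linarith)]
    nlinarith
  refine ((summable_nat_add_iff 1).mpr (Real.summable_nat_rpow.mpr hr)).congr fun k => ?_
  rw [blockWeight, ← Real.rpow_mul (by positivity)]
  push_cast
  rfl

lemma summable_diagSeq_rpow (hp0 : 0 < p) (hp1 : p < 1) :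
    Summable fun j => diagSeq p j ^ (p / (1 - p)) := by
  refine summable_of_sum_range_le (c := ∑' k, blockWeight p k ^ (1 - p)⁻¹)
    (fun j => Real.rpow_nonneg (diagSeq_nonneg j) _) fun M => ?_
  calc ∑ j ∈ range M, diagSeq p j ^ (p / (1 - p))
      ≤ ∑ j ∈ range (blockStart p M), diagSeq p j ^ (p / (1 - p)) :=
        Finset.sum_le_sum_of_subset_of_nonneg (Finset.range_mono (le_blockStart M))
          fun j _ _ => Real.rpow_nonneg (diagSeq_nonneg j) _
    _ = ∑ k ∈ range M, blockWeight p k ^ (1 - p)⁻¹ := by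
        rw [sum_range_blockStart]
        exact Finset.sum_congr rfl fun k _ => blockSize_mul_blockHeight_rpow hp0 hp1 k
    _ ≤ _ := (summable_blockWeight_rpow hp0 hp1).sum_le_tsum _
        fun k _ => Real.rpow_nonneg (blockWeight_pos k).le _

end Construction

section Thresholds

variable (p)

noncomputable def lowerBound (K : ℕ) : ℝ := (∑ k ∈ Ioc (Nat.sqrt K) K, blockWeight p k) / 8

/- `τ_k` and `β_k` of the proof sketch, normalised by `s_k τ_k ^ p = 2 Λ` and
`8 Λ β_k ^ (1 - p) = t_k`. -/
noncomputable def upperCut (Λ : ℝ) (k : ℕ) : ℝ := (2 * Λ / blockSize p k) ^ p⁻¹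

noncomputable def lowerCut (Λ : ℝ) (k : ℕ) : ℝ := (blockHeight p k / (8 * Λ)) ^ (1 - p)⁻¹

variable {p}

lemma lowerBound_le (hp : p ≤ 2) (K : ℕ) : lowerBound p K ≤ K := by
  have h := Finset.sum_le_card_nsmul (Ioc (Nat.sqrt K) K) (blockWeight p) 1
    fun k _ => blockWeight_le_one hp k
  rw [Nat.card_Ioc, nsmul_eq_mul, mul_one] at h
  have : ((K - Nat.sqrt K : ℕ) : ℝ) ≤ K := by exact_mod_cast Nat.sub_le _ _
  unfold lowerBound
  linarith [K.cast_nonneg (α := ℝ)]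

lemma rpow_div_le_lowerBound (hp : p ≤ 2) {K : ℕ} (hK : 4 ≤ K) :
    ((K : ℝ) + 1) ^ (p / 2) / 32 ≤ lowerBound p K := by
  have hsqrt : 2 * Nat.sqrt K ≤ K := by
    have h2 : 2 ≤ Nat.sqrt K := Nat.le_sqrt.mpr hK
    nlinarith [Nat.sqrt_le' K]
  have hcard : (K : ℝ) / 2 ≤ #(Ioc (Nat.sqrt K) K) := by
    rw [Nat.card_Ioc, Nat.cast_sub (Nat.sqrt_le_self K)]
    have : (2 * Nat.sqrt K : ℝ) ≤ K := by exact_mod_cast hsqrt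
    linarith
  have hK1 : (0 : ℝ) < K + 1 := by positivity
  have hγK : blockWeight p K = ((K : ℝ) + 1) ^ (p / 2) / (K + 1) := by
    rw [blockWeight, Real.rpow_sub_one hK1.ne']
  have hsum : #(Ioc (Nat.sqrt K) K) * blockWeight p K ≤
      ∑ k ∈ Ioc (Nat.sqrt K) K, blockWeight p k := by
    rw [← nsmul_eq_mul]
    exact Finset.card_nsmul_le_sum _ _ _ fun k hk =>
      blockWeight_antitone hp (Finset.mem_Ioc.mp hk).2
  have hX : 0 ≤ ((K : ℝ) + 1) ^ (p / 2) := by positivity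
  have hKK : (1 : ℝ) / 2 ≤ K / (K + 1) := by
    rw [div_le_div_iff₀ (by norm_num) hK1]
    have : (4 : ℝ) ≤ K := by exact_mod_cast hK
    linarith
  calc ((K : ℝ) + 1) ^ (p / 2) / 32 ≤ ((K : ℝ) + 1) ^ (p / 2) * (K / (K + 1)) / 16 := by
        nlinarith
    _ = (K / 2) * blockWeight p K / 8 := by rw [hγK]; ring
    _ ≤ lowerBound p K := by
        unfold lowerBound
        gcongr
        exact (mul_le_mul_of_nonneg_right hcard (blockWeight_pos K).le).trans hsum

lemma tendsto_lowerBound (hp0 : 0 < p) (hp : p ≤ 2) : Tendsto (lowerBound p) atTop atTop := by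
  refine tendsto_atTop_mono' atTop ((eventually_ge_atTop 4).mono fun K hK =>
    rpow_div_le_lowerBound hp hK) ?_
  refine Tendsto.atTop_div_const (by norm_num) ?_
  exact (tendsto_rpow_atTop (by linarith)).comp
    (tendsto_atTop_add_const_right _ 1 tendsto_natCast_atTop_atTop)

lemma upperCut_rpow (hp0 : 0 < p) {Λ : ℝ} (hΛ : 0 ≤ Λ) (k : ℕ) :
    upperCut p Λ k ^ p = 2 * Λ / blockSize p k :=
  Real.rpow_inv_rpow (by positivity) hp0.ne'

lemma lowerCut_rpow (hp1 : p < 1) {Λ : ℝ} (hΛ : 0 ≤ Λ) (k : ℕ) :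
    lowerCut p Λ k ^ (1 - p) = blockHeight p k / (8 * Λ) :=
  Real.rpow_inv_rpow (div_nonneg (blockHeight_pos k).le (by positivity)) (by linarith)

lemma lowerCut_pos {Λ : ℝ} (hΛ : 0 < Λ) (k : ℕ) : 0 < lowerCut p Λ k :=
  Real.rpow_pos_of_pos (div_pos (blockHeight_pos k) (by positivity)) _

lemma div_blockSize_lt_upperCut (hp0 : 0 < p) (hp : p ≤ 2) {Λ : ℝ} (hΛ : 1 ≤ Λ) (k : ℕ) :
    blockHeight p k / blockSize p k < upperCut p Λ k := by
  have hs : (0 : ℝ) < blockSize p k := by exact_mod_cast blockSize_pos k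
  rw [upperCut, Real.lt_rpow_inv_iff_of_pos (div_nonneg (blockHeight_pos k).le hs.le)
    (by positivity) hp0, lt_div_iff₀ hs, mul_comm, blockSize_mul_div_rpow hp0.ne']
  linarith [blockWeight_le_one hp k]

lemma lowerCut_lt_div_blockSize (hp0 : 0 < p) (hp1 : p < 1) {Λ : ℝ} (hΛ : 1 ≤ Λ) (k : ℕ) :
    lowerCut p Λ k < blockHeight p k / blockSize p k := by
  have hs : (0 : ℝ) < blockSize p k := by exact_mod_cast blockSize_pos k
  set q := blockHeight p k / blockSize p k
  have hq : 0 < q := div_pos (blockHeight_pos k) hs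
  have ht : blockHeight p k = blockSize p k * q := (mul_div_cancel₀ _ hs.ne').symm
  have hγ := blockSize_mul_div_rpow hp0.ne' k
  rw [lowerCut, Real.rpow_inv_lt_iff_of_pos (div_nonneg (blockHeight_pos k).le (by positivity))
    hq.le (by linarith), Real.rpow_one_sub' hq.le (by linarith), lt_div_iff₀ (by positivity), ht,
    div_mul_eq_mul_div, div_lt_iff₀ (by positivity)]
  have := blockWeight_le_one (p := p) (by linarith) k
  nlinarith

lemma upperCut_succ_le_lowerCut (hp0 : 0 < p) (hp1 : p < 1) {Λ : ℝ} (hΛ : 0 < Λ) {k : ℕ}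
    (hΛk : Λ ≤ ((k : ℝ) + 2) ^ 2) : upperCut p Λ (k + 1) ≤ lowerCut p Λ k := by
  set L := ((k : ℝ) + 2) ^ 2
  set t := blockHeight p k
  have hs : (0 : ℝ) < blockSize p (k + 1) := by exact_mod_cast blockSize_pos _
  have hL : 0 < L := by positivity
  have ht : 0 < t := blockHeight_pos k
  have he : 0 ≤ p / (1 - p) := div_nonneg hp0.le (by linarith)
  rw [upperCut, Real.rpow_inv_le_iff_of_pos (by positivity) (lowerCut_pos hΛ k).le hp0, lowerCut,
    ← Real.rpow_mul (by positivity), ← div_eq_inv_mul]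
  calc 2 * Λ / blockSize p (k + 1) ≤ 2 * L / (2 * L * (8 * L / t) ^ (p / (1 - p))) := by
        gcongr
        exact le_blockSize_succ k
    _ = (t / (8 * L)) ^ (p / (1 - p)) := by
        rw [div_mul_cancel_left₀ (by positivity), ← Real.inv_rpow (by positivity), inv_div]
    _ ≤ (t / (8 * Λ)) ^ (p / (1 - p)) := by gcongr

lemma upperCut_antitone (hp0 : 0 < p) {Λ : ℝ} (hΛ : 0 ≤ Λ) : Antitone (upperCut p Λ) := by
  intro k k' hkk'
  have hs : (0 : ℝ) < blockSize p k := by exact_mod_cast blockSize_pos k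
  unfold upperCut
  gcongr
  exact blockSize_mono hkk'

end Thresholds

section NormEstimate

variable {p : ℝ} {NN : ℕ} {x y : ℕ → Fin NN → ℂ}

lemma blockWeight_div_eight_le_tsum (hp0 : 0 < p) (hp1 : p < 1) {Λ : ℝ} (hΛ : 1 ≤ Λ) {k : ℕ}
    (hk : blockStart p (k + 1) ≤ NN)
    (hbx : ∀ n, BddAbove (Set.range fun i => ‖x n i‖))
    (hby : ∀ n, BddAbove (Set.range fun i => ‖y n i‖))
    (hsum : ∀ i j, HasSum (fun n => x n i * y n j) (if i = j then (diagSeq p i : ℂ) else 0))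
    (ha : Summable fun n => termNorm x y n ^ p) (hA : ∑' n, termNorm x y n ^ p < Λ) :
    blockWeight p k / 8 ≤ ∑' n,
      (termNorm x y ⁻¹' Set.Ioc (lowerCut p Λ k) (upperCut p Λ k)).indicator
        (fun n => termNorm x y n ^ p) n := by
  have hs : (0 : ℝ) < blockSize p k := by exact_mod_cast blockSize_pos k
  have ht := blockHeight_pos (p := p) k
  have hlt : ∀ m ∈ Finset.Ico (blockStart p k) (blockStart p (k + 1)), m < NN :=
    fun m hm => (Finset.mem_Ico.mp hm).2.trans_le hk
  set B := (Finset.Ico (blockStart p k) (blockStart p (k + 1))).attachFin hlt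
  have hcard : #B = blockSize p k := by
    rw [Finset.card_attachFin, Nat.card_Ico, blockStart, Nat.add_sub_cancel_left]
  have hμB : ∀ i ∈ B, diagSeq p i = blockHeight p k := fun i hi => by
    obtain ⟨h₁, h₂⟩ := Finset.mem_Ico.mp ((Finset.mem_attachFin hlt).mp hi)
    exact diagSeq_eq h₁ h₂
  have haS := summable_of_summable_rpow hp0 hp1.le (termNorm_nonneg x y) ha
  have htrace := fun F => sub_card_mul_le_tsum_indicator hbx hby hsum haS ht.le hμB F
  rw [hcard] at htrace
  have hA' : ∑' n, termNorm x y n ^ p < blockSize p k * upperCut p Λ k ^ p / 2 := by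
    rw [upperCut_rpow hp0 (by linarith), mul_div_cancel₀ _ hs.ne']
    linarith
  rcases block_dichotomy hp0 hp1.le (termNorm_nonneg x y) ha hs ht
    (lowerCut_lt_div_blockSize hp0 hp1 hΛ k) (div_blockSize_lt_upperCut hp0 (by linarith) hΛ k)
    hA' htrace with h | h
  · rwa [blockSize_mul_div_rpow hp0.ne'] at h
  · have hβ := lowerCut_pos (p := p) (by linarith : 0 < Λ) k
    have hS := tsum_indicator_Iic_le hp1.le (termNorm_nonneg x y) ha hβ.le
    have : lowerCut p Λ k ^ (1 - p) * ∑' n, termNorm x y n ^ p < blockHeight p k / 8 := by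
      calc _ < lowerCut p Λ k ^ (1 - p) * Λ := mul_lt_mul_of_pos_left hA (by positivity)
        _ = blockHeight p k / 8 := by
          rw [lowerCut_rpow hp1 (by linarith)]
          field_simp
    linarith

lemma lowerBound_le_tsum (hp0 : 0 < p) (hp1 : p < 1) {K : ℕ} (hK : 1 ≤ lowerBound p K)
    (hNN : blockStart p (K + 1) ≤ NN)
    (hbx : ∀ n, BddAbove (Set.range fun i => ‖x n i‖))
    (hby : ∀ n, BddAbove (Set.range fun i => ‖y n i‖))
    (hsum : ∀ i j, HasSum (fun n => x n i * y n j) (if i = j then (diagSeq p i : ℂ) else 0))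
    (ha : Summable fun n => termNorm x y n ^ p) :
    lowerBound p K ≤ ∑' n, termNorm x y n ^ p := by
  by_contra! hA
  set Λ := lowerBound p K
  set G := Ioc (Nat.sqrt K) K
  have hΛk : ∀ k ∈ G, Λ ≤ ((k : ℝ) + 2) ^ 2 := fun k hk => by
    have hKk : K < k ^ 2 := Nat.sqrt_lt'.mp (Finset.mem_Ioc.mp hk).1
    have : (K : ℝ) < (k : ℝ) ^ 2 := by exact_mod_cast hKk
    nlinarith [lowerBound_le (p := p) (by linarith) K, k.cast_nonneg (α := ℝ)]
  have hband : ∀ k ∈ G, blockWeight p k / 8 ≤ ∑' n,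
      (termNorm x y ⁻¹' Set.Ioc (lowerCut p Λ k) (upperCut p Λ k)).indicator
        (fun n => termNorm x y n ^ p) n := fun k hk =>
    blockWeight_div_eight_le_tsum hp0 hp1 hK
      ((blockStart_mono (by simpa using (Finset.mem_Ioc.mp hk).2)).trans hNN) hbx hby hsum ha hA
  have hdisj : (G : Set ℕ).PairwiseDisjoint
      fun k => termNorm x y ⁻¹' Set.Ioc (lowerCut p Λ k) (upperCut p Λ k) := by
    have := pairwiseDisjoint_Ioc (β := lowerCut p Λ) (τ := upperCut p Λ) G fun k hk k' hkk' =>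
      (upperCut_antitone hp0 (by linarith) hkk').trans
        (upperCut_succ_le_lowerCut hp0 hp1 (by linarith) (hΛk k hk))
    exact fun k hk k' hk' hne => (this hk hk' hne).preimage _
  have hsum_le := sum_tsum_indicator_le_tsum (fun n => Real.rpow_nonneg (termNorm_nonneg x y n) p)
    ha G _ hdisj
  have : Λ ≤ ∑' n, termNorm x y n ^ p := by
    calc Λ = ∑ k ∈ G, blockWeight p k / 8 := by rw [← Finset.sum_div]; rfl
      _ ≤ _ := (Finset.sum_le_sum hband).trans hsum_le
  linarith

lemma rpow_inv_lowerBound_le (hp0 : 0 < p) (hp1 : p < 1) {K : ℕ} (hK : 1 ≤ lowerBound p K)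
    (hNN : blockStart p (K + 1) ≤ NN) {c : ℝ}
    (hc : c ∈ tensorReprVals p fun i j : Fin NN => if i = j then (diagSeq p i : ℂ) else 0) :
    lowerBound p K ^ p⁻¹ ≤ c := by
  obtain ⟨x, y, hbx, hby, hsumm, hsum, rfl⟩ := hc
  simp only [← Real.mul_rpow (supNorm_nonneg _) (supNorm_nonneg _)] at hsumm ⊢
  rw [one_div]
  exact Real.rpow_le_rpow (by linarith) (lowerBound_le_tsum hp0 hp1 hK hNN hbx hby hsum hsumm)
    (inv_nonneg.mpr hp0.le)

end NormEstimate

lemma tensorReprVals_nonempty {p : ℝ} (hp0 : 0 < p) {N : ℕ} (M : Fin N → Fin N → ℂ) :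
    (tensorReprVals p M).Nonempty := by
  let x : ℕ → Fin N → ℂ := fun m i => if h : m < N then M i ⟨m, h⟩ else 0
  let y : ℕ → Fin N → ℂ := fun m j => if (j : ℕ) = m then 1 else 0
  refine ⟨_, x, y, fun _ => (Set.finite_range _).bddAbove, fun _ => (Set.finite_range _).bddAbove,
    summable_of_ne_finset_zero (s := range N) fun m hm => ?_, fun i j => ?_, rfl⟩
  · have hy : ∀ j : Fin N, y m j = 0 := fun j =>
      if_neg fun h : (j : ℕ) = m => hm (Finset.mem_range.mpr (h ▸ j.isLt))
    simp [supNorm, hy, Real.zero_rpow hp0.ne']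
  · convert hasSum_single (f := fun m => x m i * y m j) (j : ℕ) fun m hm => ?_ using 1
    · simp [x, y]
    · simp [y, Ne.symm hm]

end DiagonalTensorNorm

open DiagonalTensorNorm

theorem stmt9 (p : ℝ) (hp0 : 0 < p) (hp1 : p < 1) :
    ∃ μ : ℕ → ℝ, (∀ j, 0 ≤ μ j) ∧
      (Summable fun j => μ j ^ (p / (1 - p))) ∧
      ¬ BddAbove (Set.range fun n : ℕ =>
        sInf (tensorReprVals p fun j k : Fin (n + 1) =>
          if j = k then (μ j : ℂ) else 0)) := by
  refine ⟨diagSeq p, diagSeq_nonneg, summable_diagSeq_rpow hp0 hp1,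
    not_bddAbove_iff.mpr fun C => ?_⟩
  have hΛ := tendsto_lowerBound hp0 (by linarith : p ≤ 2)
  obtain ⟨K, hK1, hKC⟩ := ((hΛ.eventually_ge_atTop 1).and
    (((tendsto_rpow_atTop (inv_pos.mpr hp0)).comp hΛ).eventually_gt_atTop C)).exists
  refine ⟨_, ⟨blockStart p (K + 1), rfl⟩, hKC.trans_le ?_⟩
  exact le_csInf (tensorReprVals_nonempty hp0 _) fun c hc =>
    rpow_inv_lowerBound_le hp0 hp1 hK1 (Nat.le_succ _) hc
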